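/- arXiv:2502.01095 — 2 statements merged into one kernel-verified Lean document; each statement's English description precedes it below -/
import Mathlib

section
/- For every λ ≥ 0, e^{-λ} = (1/√π) ∫₀^∞ e^{-s} e^{-λ²/(4s)} s^{-1/2} ds. -/
/-!
Substituting `s = x ^ 2` turns the integral into `2 ∫₀^∞ exp (-x ^ 2 - l ^ 2 / (4 x ^ 2)) dx`,
and `x ^ 2 + l ^ 2 / (4 x ^ 2) = (x - a / x) ^ 2 + l` with `a = l / 2`. By the Cauchy–Schlömilch
transformation, `∫₀^∞ g (x - a / x) dx = ½ ∫ g` for every even integrable `g`: the map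
`x ↦ x - a / x` is a bijection of `(0, ∞)` onto `ℝ` with Jacobian `1 + a / x ^ 2`, and the inversion
`x ↦ a / x` carries the part weighted by `a / x ^ 2` to the integral of `g (a / x - x) = g (x - a / x)`.
Applied to the Gaussian this gives `√π / 2`.
-/

open MeasureTheory Set Real

variable {E : Type*} [NormedAddCommGroup E] [NormedSpace ℝ E] {a : ℝ}

lemma hasDerivAt_sub_div (a : ℝ) {x : ℝ} (hx : x ≠ 0) :
    HasDerivAt (fun x => x - a / x) (1 + a / x ^ 2) x :=
  ((hasDerivAt_id' x).fun_sub ((hasDerivAt_const x a).fun_div (hasDerivAt_id' x) hx)).congr_deriv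
    (by ring)

lemma strictMonoOn_sub_div (ha : 0 ≤ a) : StrictMonoOn (fun x => x - a / x) (Ioi 0) := by
  intro x hx y hy hxy
  have : a / y ≤ a / x := div_le_div_of_nonneg_left ha hx hxy.le
  show x - a / x < y - a / y
  linarith

lemma image_sub_div_Ioi (ha : 0 < a) : (fun x => x - a / x) '' Ioi 0 = univ := by
  refine eq_univ_of_forall fun u => ?_
  -- the positive root of x ^ 2 - u x - a
  set r := √(u ^ 2 + 4 * a)
  have hr : r ^ 2 = u ^ 2 + 4 * a := sq_sqrt (by positivity)
  have hur : |u| < r := by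
    rw [← sqrt_sq_eq_abs]
    exact sqrt_lt_sqrt (sq_nonneg u) (by linarith)
  have hx : 0 < (u + r) / 2 := by linarith [neg_abs_le u]
  refine ⟨(u + r) / 2, hx, ?_⟩
  have : a / ((u + r) / 2) = (r - u) / 2 := by
    rw [div_eq_iff hx.ne']
    linear_combination -hr / 4
  simp only [this]
  ring

lemma integral_Ioi_one_add_div_sq_smul_comp_sub_div (ha : 0 < a) (g : ℝ → E) :
    ∫ x in Ioi 0, (1 + a / x ^ 2) • g (x - a / x) = ∫ u, g u := by
  have := integral_image_eq_integral_abs_deriv_smul measurableSet_Ioi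
    (fun x hx => (hasDerivAt_sub_div a (ne_of_gt hx)).hasDerivWithinAt)
    (strictMonoOn_sub_div ha.le).injOn g
  rw [image_sub_div_Ioi ha, Measure.restrict_univ] at this
  rw [this]
  refine setIntegral_congr_fun measurableSet_Ioi fun x _ => ?_
  rw [abs_of_pos (by positivity)]

lemma integrableOn_Ioi_one_add_div_sq_smul_comp_sub_div_iff (ha : 0 < a) (g : ℝ → E) :
    IntegrableOn (fun x => (1 + a / x ^ 2) • g (x - a / x)) (Ioi 0) ↔ Integrable g := by
  have := integrableOn_image_iff_integrableOn_abs_deriv_smul measurableSet_Ioi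
    (fun x hx => (hasDerivAt_sub_div a (ne_of_gt hx)).hasDerivWithinAt)
    (strictMonoOn_sub_div ha.le).injOn g
  rw [image_sub_div_Ioi ha, integrableOn_univ] at this
  rw [this]
  refine integrableOn_congr_fun (fun x _ => ?_) measurableSet_Ioi
  rw [abs_of_pos (by positivity)]

lemma integral_Ioi_div_sq_smul_comp_sub_div (ha : 0 < a) (g : ℝ → E) :
    ∫ x in Ioi 0, (a / x ^ 2) • g (x - a / x) = ∫ x in Ioi 0, g (a / x - x) := by
  have hinv : ∀ x ∈ Ioi (0 : ℝ), HasDerivWithinAt (fun x => a / x) (-(a / x ^ 2)) (Ioi 0) x := by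
    intro x hx
    simpa [div_eq_mul_inv] using ((hasDerivAt_inv (ne_of_gt hx)).const_mul a).hasDerivWithinAt
  have hinj : InjOn (fun x => a / x) (Ioi 0) := fun x hx y hy hxy =>
    inv_injective (mul_left_cancel₀ ha.ne' (by simpa [div_eq_mul_inv] using hxy))
  have himage : (fun x => a / x) '' Ioi 0 = Ioi 0 := by
    refine Subset.antisymm (image_subset_iff.2 fun x hx => div_pos ha hx) fun y hy => ?_
    exact ⟨a / y, div_pos ha hy, div_div_cancel₀ ha.ne'⟩
  have := integral_image_eq_integral_abs_deriv_smul measurableSet_Ioi hinv hinj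
    fun y => g (a / y - y)
  rw [himage] at this
  rw [this]
  refine setIntegral_congr_fun measurableSet_Ioi fun x hx => ?_
  rw [abs_neg, abs_of_pos (div_pos ha (pow_pos hx 2)), div_div_cancel₀ ha.ne']

theorem integral_Ioi_comp_sub_div_of_even (ha : 0 < a) {g : ℝ → E} (hg : Integrable g)
    (hg_even : ∀ u, g (-u) = g u) :
    ∫ x in Ioi 0, g (x - a / x) = (2 : ℝ)⁻¹ • ∫ u, g u := by
  have hweighted := (integrableOn_Ioi_one_add_div_sq_smul_comp_sub_div_iff ha g).2 hg
  have hpos : ∀ x : ℝ, 0 < 1 + a / x ^ 2 := fun x => by positivity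
  -- dividing by the weight `1 + a / x ^ 2 ≥ 1` preserves integrability
  have hint : IntegrableOn (fun x => g (x - a / x)) (Ioi 0) := by
    have := hweighted.bdd_smul 1 (φ := fun x => (1 + a / x ^ 2)⁻¹)
      (Measurable.aestronglyMeasurable (by fun_prop)) (ae_of_all _ fun x => ?_)
    · refine this.congr (ae_of_all _ fun x => ?_)
      simp [smul_smul, inv_mul_cancel₀ (hpos x).ne']
    · rw [norm_inv, Real.norm_of_nonneg (hpos x).le]
      exact inv_le_one_of_one_le₀ (le_add_of_nonneg_right (by positivity))
  have hrest : IntegrableOn (fun x => (a / x ^ 2) • g (x - a / x)) (Ioi 0) := by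
    refine (hweighted.sub hint).congr (ae_of_all _ fun x => ?_)
    simp [add_smul]
  have hreflect : ∫ x in Ioi 0, g (a / x - x) = ∫ x in Ioi 0, g (x - a / x) := by
    congr with x
    rw [← neg_sub, hg_even]
  have hsplit := integral_Ioi_one_add_div_sq_smul_comp_sub_div ha g
  simp_rw [add_smul, one_smul] at hsplit
  rw [integral_add hint hrest, integral_Ioi_div_sq_smul_comp_sub_div ha, hreflect] at hsplit
  rw [← hsplit, ← two_smul ℝ, smul_smul, inv_mul_cancel₀ two_ne_zero, one_smul]

lemma integral_Ioi_exp_neg_sq_sub_div (ha : 0 ≤ a) :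
    ∫ x in Ioi 0, exp (-(x - a / x) ^ 2) = √π / 2 := by
  rcases ha.eq_or_lt with rfl | ha
  · simpa using integral_gaussian_Ioi 1
  · have := integral_Ioi_comp_sub_div_of_even ha (g := fun u => exp (-u ^ 2))
      (by simpa using integrable_exp_neg_mul_sq one_pos) (fun u => by simp)
    rw [this, smul_eq_mul, inv_mul_eq_div]
    simpa using integral_gaussian 1

lemma integral_Ioi_inv_sqrt_smul (f : ℝ → E) :
    ∫ s in Ioi 0, (√s)⁻¹ • f s = (2 : ℝ) • ∫ x in Ioi 0, f (x ^ 2) := by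
  rw [← integral_comp_rpow_Ioi_of_pos two_pos, ← integral_smul]
  refine setIntegral_congr_fun measurableSet_Ioi fun x hx => ?_
  have hx : 0 < x := hx
  rw [rpow_two, sqrt_sq hx.le, smul_smul, show (2 : ℝ) - 1 = 1 by norm_num, rpow_one,
    mul_inv_cancel_right₀ hx.ne']

lemma exp_neg_sq_mul_exp_neg_sq_div (l : ℝ) {x : ℝ} (hx : x ≠ 0) :
    exp (-x ^ 2) * exp (-l ^ 2 / (4 * x ^ 2)) = exp (-l) * exp (-(x - l / 2 / x) ^ 2) := by
  rw [← exp_add, ← exp_add]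
  congr 1
  field_simp
  ring

theorem subordination_identity (l : ℝ) (hl : 0 ≤ l) :
    Real.exp (-l) =
      (Real.sqrt Real.pi)⁻¹ *
        ∫ s in Set.Ioi (0:ℝ), Real.exp (-s) * Real.exp (-l ^ 2 / (4 * s)) / Real.sqrt s := by
  have hsquare : ∫ s in Ioi 0, exp (-s) * exp (-l ^ 2 / (4 * s)) / √s =
      2 * ∫ x in Ioi 0, exp (-x ^ 2) * exp (-l ^ 2 / (4 * x ^ 2)) := by
    have h := integral_Ioi_inv_sqrt_smul fun s => exp (-s) * exp (-l ^ 2 / (4 * s))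
    simp only [smul_eq_mul] at h
    rw [← h]
    exact setIntegral_congr_fun measurableSet_Ioi fun s _ => div_eq_inv_mul _ _
  have hcomplete : ∫ x in Ioi 0, exp (-x ^ 2) * exp (-l ^ 2 / (4 * x ^ 2)) = exp (-l) * (√π / 2) := by
    rw [← integral_Ioi_exp_neg_sq_sub_div (by positivity : 0 ≤ l / 2), ← integral_const_mul]
    exact setIntegral_congr_fun measurableSet_Ioi fun x hx => exp_neg_sq_mul_exp_neg_sq_div l (ne_of_gt hx)
  have hπ : 0 < √π := sqrt_pos.2 pi_pos
  rw [hsquare, hcomplete]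
  field_simp
end

section
/- Let g : ℝ → ℂ be twice continuously differentiable with ‖g‖_∞, ‖s²g(s)‖_∞, ‖g''‖_∞, ‖s²g''(s)‖_∞ all finite and with g, g'' integrable. Then the Fourier transform ĝ satisfies ∫_{-∞}^{∞} |ĝ(t)| dt ≤ π² ( ‖g‖_∞ + ‖s² g(s)‖_∞^{1/2} ‖g''‖_∞^{1/2} + ‖s² g''(s)‖_∞ ). -/
/-!
Since `‖ĝ t‖ ≤ ‖g‖₁` and `(2πt)² ‖ĝ t‖ = ‖𝓕 g'' t‖ ≤ ‖g''‖₁`, the weight `1 + (2πbt)²` times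
`‖ĝ t‖` is at most `‖g‖₁ + b² ‖g''‖₁`; as `∫ (1 + (ct)²)⁻¹ dt = π / c`, this gives
`∫ ‖ĝ‖ ≤ (‖g‖₁ + b² ‖g''‖₁) / (2b)`. The same weighted integral bounds `‖g‖₁` and `‖g''‖₁` by the
sup-norm data, and optimizing over `b` produces the term `√(BC)`. Applying `𝓕 f' t = 2πit 𝓕 f t`
to `f = g'` needs `g'` integrable, which follows from the Taylor estimate
`‖g' x‖ ≤ ‖g (x + 1) - g x‖ + sup_{[x, x + 1]} ‖g''‖`.
-/

open MeasureTheory Real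

section Decay

variable {E : Type*} [NormedAddCommGroup E]

lemma mul_one_add_mul_sq_le {y s A B : ℝ} (a : ℝ) (hA : y ≤ A) (hB : s ^ 2 * y ≤ B) :
    y * (1 + (a * s) ^ 2) ≤ A + a ^ 2 * B :=
  calc y * (1 + (a * s) ^ 2) = y + a ^ 2 * (s ^ 2 * y) := by ring
    _ ≤ A + a ^ 2 * B := by gcongr

lemma integral_norm_le_of_norm_mul_one_add_sq_le {f : ℝ → E} {a M : ℝ} (ha : 0 < a)
    (h : ∀ s, ‖f s‖ * (1 + (a * s) ^ 2) ≤ M) : ∫ s, ‖f s‖ ≤ M * π / a := by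
  have hbound : ∀ s, ‖f s‖ ≤ M * (1 + (a * s) ^ 2)⁻¹ := fun s => by
    rw [← div_eq_mul_inv, le_div_iff₀ (by positivity)]
    exact h s
  calc ∫ s, ‖f s‖ ≤ ∫ s, M * (1 + (a * s) ^ 2)⁻¹ :=
        integral_mono_of_nonneg (.of_forall fun s => norm_nonneg _)
          ((integrable_inv_one_add_sq.comp_mul_left' ha.ne').const_mul M) (.of_forall hbound)
    _ = M * π / a := by
        rw [integral_const_mul, Measure.integral_comp_mul_left (fun x => (1 + x ^ 2)⁻¹) a,
          integral_univ_inv_one_add_sq, abs_of_pos (inv_pos.2 ha), smul_eq_mul]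
        ring

lemma integral_norm_le_of_sq_mul_norm_le {f : ℝ → E} {a A B : ℝ} (ha : 0 < a)
    (hA : ∀ s, ‖f s‖ ≤ A) (hB : ∀ s, s ^ 2 * ‖f s‖ ≤ B) :
    ∫ s, ‖f s‖ ≤ (A + a ^ 2 * B) * π / a :=
  integral_norm_le_of_norm_mul_one_add_sq_le ha fun s => mul_one_add_mul_sq_le a (hA s) (hB s)

end Decay

lemma one_add_sq_le_three_mul_one_add_sq {x v : ℝ} (hv : v ∈ Set.Icc x (x + 1)) :
    1 + x ^ 2 ≤ 3 * (1 + v ^ 2) := by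
  nlinarith [sq_nonneg (x - 2 * v), mul_nonneg (sub_nonneg.2 hv.1) (sub_nonneg.2 hv.2)]

section Derivative

variable {E : Type*} [NormedAddCommGroup E] [NormedSpace ℝ E] {f f' f'' : ℝ → E}

lemma norm_deriv_le_of_norm_deriv2_le (hf : ∀ s, HasDerivAt f (f' s) s)
    (hf' : ∀ s, HasDerivAt f' (f'' s) s) {x M : ℝ}
    (hM : ∀ v ∈ Set.Icc x (x + 1), ‖f'' v‖ ≤ M) :
    ‖f' x‖ ≤ ‖f (x + 1) - f x‖ + M := by
  have hM0 : 0 ≤ M := (norm_nonneg _).trans (hM x (Set.left_mem_Icc.2 (by linarith)))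
  have hf'_sub : ∀ u ∈ Set.Icc x (x + 1), ‖f' u - f' x‖ ≤ M * (u - x) :=
    norm_image_sub_le_of_norm_deriv_le_segment' (fun u _ => (hf' u).hasDerivWithinAt)
      fun v hv => hM v (Set.Ico_subset_Icc_self hv)
  have hrem : ∀ u, HasDerivAt (fun u => f u - (u - x) • f' x) (f' u - f' x) u := fun u => by
    simpa using (hf u).fun_sub (((hasDerivAt_id u).sub_const x).smul_const (f' x))
  have hrem_le := norm_image_sub_le_of_norm_deriv_le_segment'
    (fun u _ => (hrem u).hasDerivWithinAt)
    (fun u hu => (hf'_sub u (Set.Ico_subset_Icc_self hu)).trans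
      (mul_le_of_le_one_right hM0 (by linarith [hu.2])))
    (x + 1) (Set.right_mem_Icc.2 (by linarith))
  simp only [add_sub_cancel_left, one_smul, sub_self, zero_smul, sub_zero, mul_one] at hrem_le
  calc ‖f' x‖ = ‖(f (x + 1) - f x) - (f (x + 1) - f' x - f x)‖ := by congr 1; abel
    _ ≤ ‖f (x + 1) - f x‖ + M := (norm_sub_le _ _).trans (by gcongr)

lemma integrable_deriv_of_sq_mul_norm_deriv2_le (hf : ∀ s, HasDerivAt f (f' s) s)
    (hf' : ∀ s, HasDerivAt f' (f'' s) s) (hint : Integrable f) {C D : ℝ}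
    (hC : ∀ s, ‖f'' s‖ ≤ C) (hD : ∀ s, s ^ 2 * ‖f'' s‖ ≤ D) : Integrable f' := by
  have hf''_le : ∀ x, ∀ v ∈ Set.Icc x (x + 1), ‖f'' v‖ ≤ 3 * (C + D) * (1 + x ^ 2)⁻¹ := by
    intro x v hv
    rw [← div_eq_mul_inv, le_div_iff₀ (by positivity)]
    calc ‖f'' v‖ * (1 + x ^ 2) ≤ 3 * (‖f'' v‖ * (1 + (1 * v) ^ 2)) := by
          nlinarith [one_add_sq_le_three_mul_one_add_sq hv, norm_nonneg (f'' v)]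
      _ ≤ 3 * (C + 1 ^ 2 * D) := by gcongr; exact mul_one_add_mul_sq_le 1 (hC v) (hD v)
      _ = 3 * (C + D) := by ring
  refine Integrable.mono' (g := fun x => ‖f (x + 1) - f x‖ + 3 * (C + D) * (1 + x ^ 2)⁻¹)
    (((hint.comp_add_right 1).sub hint).norm.add (integrable_inv_one_add_sq.const_mul _))
    (continuous_iff_continuousAt.2 fun s => (hf' s).continuousAt).aestronglyMeasurable
    (.of_forall fun x => norm_deriv_le_of_norm_deriv2_le hf hf' (hf''_le x))

end Derivative

section Fourier

open FourierTransform

variable {E : Type*} [NormedAddCommGroup E] [NormedSpace ℂ E] {g g' g'' : ℝ → E}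

lemma norm_fourier_le_integral_norm (g : ℝ → E) (t : ℝ) : ‖𝓕 g t‖ ≤ ∫ s, ‖g s‖ :=
  VectorFourier.norm_fourierIntegral_le_integral_norm _ _ _ _ _

lemma fourier_eq_smul_fourier_of_hasDerivAt (hg : ∀ s, HasDerivAt g (g' s) s)
    (hint : Integrable g) (hint' : Integrable g') (t : ℝ) :
    𝓕 g' t = (2 * π * Complex.I * t) • 𝓕 g t := by
  have hderiv : deriv g = g' := funext fun s => (hg s).deriv
  have h := Real.fourier_deriv hint (fun s => (hg s).differentiableAt) (hderiv ▸ hint')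
  rw [hderiv] at h
  exact congrFun h t

lemma sq_mul_norm_fourier_le (hg : ∀ s, HasDerivAt g (g' s) s)
    (hg' : ∀ s, HasDerivAt g' (g'' s) s) (hint : Integrable g) (hint' : Integrable g')
    (hint'' : Integrable g'') (t : ℝ) :
    (2 * π * t) ^ 2 * ‖𝓕 g t‖ ≤ ∫ s, ‖g'' s‖ := by
  have h := norm_fourier_le_integral_norm g'' t
  rw [fourier_eq_smul_fourier_of_hasDerivAt hg' hint' hint'',
    fourier_eq_smul_fourier_of_hasDerivAt hg hint hint', norm_smul, norm_smul] at h
  have hnorm : ‖2 * π * Complex.I * t‖ = 2 * π * |t| := by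
    simp [abs_of_pos pi_pos]
  rw [hnorm] at h
  calc (2 * π * t) ^ 2 * ‖𝓕 g t‖ = 2 * π * |t| * (2 * π * |t| * ‖𝓕 g t‖) := by
        rw [← sq_abs (2 * π * t)]; simp only [abs_mul, abs_two, abs_of_pos pi_pos]; ring
    _ ≤ ∫ s, ‖g'' s‖ := h

lemma integral_norm_fourier_le (hg : ∀ s, HasDerivAt g (g' s) s)
    (hg' : ∀ s, HasDerivAt g' (g'' s) s) (hint : Integrable g) (hint' : Integrable g')
    (hint'' : Integrable g'') {b : ℝ} (hb : 0 < b) :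
    ∫ t, ‖𝓕 g t‖ ≤ ((∫ s, ‖g s‖) + b ^ 2 * ∫ s, ‖g'' s‖) / (2 * b) := by
  have hpoint : ∀ t, ‖𝓕 g t‖ * (1 + (2 * π * b * t) ^ 2)
      ≤ (∫ s, ‖g s‖) + b ^ 2 * ∫ s, ‖g'' s‖ := fun t =>
    calc ‖𝓕 g t‖ * (1 + (2 * π * b * t) ^ 2)
        = ‖𝓕 g t‖ + b ^ 2 * ((2 * π * t) ^ 2 * ‖𝓕 g t‖) := by ring
      _ ≤ _ := add_le_add (norm_fourier_le_integral_norm g t)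
          (mul_le_mul_of_nonneg_left (sq_mul_norm_fourier_le hg hg' hint hint' hint'' t)
            (sq_nonneg b))
  convert integral_norm_le_of_norm_mul_one_add_sq_le (by positivity) hpoint using 1
  field_simp

-- the weights `1 / (2πb)` for `g` and `π / b` for `g''` make the powers of `π` cancel
lemma integral_norm_fourier_le_of_sq_mul_norm_le (hg : ∀ s, HasDerivAt g (g' s) s)
    (hg' : ∀ s, HasDerivAt g' (g'' s) s) (hint : Integrable g) (hint' : Integrable g')
    (hint'' : Integrable g'') {A B C D : ℝ} (hA : ∀ s, ‖g s‖ ≤ A) (hB : ∀ s, s ^ 2 * ‖g s‖ ≤ B)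
    (hC : ∀ s, ‖g'' s‖ ≤ C) (hD : ∀ s, s ^ 2 * ‖g'' s‖ ≤ D) {β : ℝ} (hβ : 0 < β) :
    ∫ t, ‖𝓕 g t‖ ≤ π ^ 2 * A + π ^ 2 * D / 2 + B / 4 / β + β * (C / 2) := by
  set b := √β
  have hb : 0 < b := sqrt_pos.2 hβ
  calc ∫ t, ‖𝓕 g t‖ ≤ ((∫ s, ‖g s‖) + b ^ 2 * ∫ s, ‖g'' s‖) / (2 * b) :=
        integral_norm_fourier_le hg hg' hint hint' hint'' hb
    _ ≤ ((A + (1 / (2 * π * b)) ^ 2 * B) * π / (1 / (2 * π * b))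
          + b ^ 2 * ((C + (π / b) ^ 2 * D) * π / (π / b))) / (2 * b) := by
        gcongr
        exacts [integral_norm_le_of_sq_mul_norm_le (by positivity) hA hB,
          integral_norm_le_of_sq_mul_norm_le (by positivity) hC hD]
    _ = π ^ 2 * A + π ^ 2 * D / 2 + B / 4 / β + β * (C / 2) := by
        rw [← sq_sqrt hβ.le]
        field_simp
        ring

end Fourier

lemma le_add_two_sqrt_mul_of_forall_le {x P B C : ℝ} (hB : 0 ≤ B) (hC : 0 ≤ C)
    (h : ∀ β > 0, x ≤ P + B / β + β * C) : x ≤ P + 2 * √(B * C) := by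
  -- perturbing `B, C` makes the optimal `β = √(B / C)` available even when one of them vanishes
  have hε : ∀ ε > 0, x ≤ P + 2 * √((B + ε) * (C + ε)) := by
    intro ε hε
    set p := √(B + ε)
    set q := √(C + ε)
    have hp : 0 < p := sqrt_pos.2 (by linarith)
    have hq : 0 < q := sqrt_pos.2 (by linarith)
    have hBp : B ≤ p ^ 2 := by rw [sq_sqrt (by linarith)]; linarith
    have hCq : C ≤ q ^ 2 := by rw [sq_sqrt (by linarith)]; linarith
    rw [sqrt_mul (by linarith)]
    calc x ≤ P + B / (p / q) + p / q * C := h _ (by positivity)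
      _ = P + (B * q ^ 2 + p ^ 2 * C) / (p * q) := by field_simp; ring
      _ ≤ P + (p ^ 2 * q ^ 2 + p ^ 2 * q ^ 2) / (p * q) := by gcongr
      _ = P + 2 * (p * q) := by field_simp; ring
  have hlim : Filter.Tendsto (fun ε => P + 2 * √((B + ε) * (C + ε)))
      (nhdsWithin 0 (Set.Ioi 0)) (nhds (P + 2 * √(B * C))) := by
    apply tendsto_nhdsWithin_of_tendsto_nhds
    simpa using ((continuous_const.add continuous_id).mul
      (continuous_const.add continuous_id)).sqrt.const_mul 2 |>.const_add P |>.tendsto 0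
  exact ge_of_tendsto hlim (eventually_nhdsWithin_of_forall hε)

theorem fourier_L1_bound_general (g g' g'' : ℝ → ℂ)
    (hg' : ∀ s, HasDerivAt g (g' s) s) (hg'' : ∀ s, HasDerivAt g' (g'' s) s)
    (A B C D : ℝ)
    (hA : ∀ s, ‖g s‖ ≤ A) (hB : ∀ s : ℝ, ‖(s : ℂ) ^ 2 * g s‖ ≤ B)
    (hC : ∀ s, ‖g'' s‖ ≤ C) (hD : ∀ s : ℝ, ‖(s : ℂ) ^ 2 * g'' s‖ ≤ D)
    (hint : Integrable g) (hint'' : Integrable g'') :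
    ∫ t : ℝ, ‖FourierTransform.fourier g t‖ ≤ π ^ 2 * (A + Real.sqrt (B * C) + D) := by
  simp only [norm_mul, norm_pow, Complex.norm_real, norm_eq_abs, sq_abs] at hB hD
  have hB0 : 0 ≤ B := le_trans (by positivity) (hB 0)
  have hC0 : 0 ≤ C := (norm_nonneg _).trans (hC 0)
  have hD0 : 0 ≤ D := le_trans (by positivity) (hD 0)
  have hint' := integrable_deriv_of_sq_mul_norm_deriv2_le hg' hg'' hint hC hD
  have hsqrt : 2 * √(B / 4 * (C / 2)) ≤ π ^ 2 * √(B * C) :=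
    calc 2 * √(B / 4 * (C / 2)) ≤ 2 * √(B * C) := by
          gcongr 2 * √?_; nlinarith [mul_nonneg hB0 hC0]
      _ ≤ π ^ 2 * √(B * C) := by gcongr; nlinarith [pi_gt_three]
  calc ∫ t, ‖FourierTransform.fourier g t‖
      ≤ π ^ 2 * A + π ^ 2 * D / 2 + 2 * √(B / 4 * (C / 2)) :=
        le_add_two_sqrt_mul_of_forall_le (by positivity) (by positivity) fun β hβ =>
          integral_norm_fourier_le_of_sq_mul_norm_le hg' hg'' hint hint' hint'' hA hB hC hD hβ
    _ ≤ π ^ 2 * (A + √(B * C) + D) := by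
        nlinarith [half_le_self (by positivity : 0 ≤ π ^ 2 * D)]

theorem fourier_L1_bound (g g' g'' : ℝ → ℂ)
    (hg' : ∀ s, HasDerivAt g (g' s) s) (hg'' : ∀ s, HasDerivAt g' (g'' s) s)
    (hcont : Continuous g'')
    (A B C D : ℝ)
    (hA : ∀ s, ‖g s‖ ≤ A) (hB : ∀ s : ℝ, ‖(s : ℂ) ^ 2 * g s‖ ≤ B)
    (hC : ∀ s, ‖g'' s‖ ≤ C) (hD : ∀ s : ℝ, ‖(s : ℂ) ^ 2 * g'' s‖ ≤ D)
    (hint : Integrable g) (hint'' : Integrable g'') :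
    ∫ t : ℝ, ‖FourierTransform.fourier g t‖ ≤ π ^ 2 * (A + Real.sqrt (B * C) + D) :=
  fourier_L1_bound_general g g' g'' hg' hg'' A B C D hA hB hC hD hint hint''
end
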